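/- For every n ≥ 0, t(n) ≡ p(n) (mod 2), where t(n) is the number of partitions λ of n with O(λ) ≡ O(λ') (mod 4) and p(n) is the total number of partitions of n. -/
import Mathlib


/-- The number of odd parts (odd row lengths) of the partition given by a Young diagram. -/
def oddParts (mu : YoungDiagram) : Nat :=
  ((Finset.range mu.card).filter (fun i => Odd (mu.rowLen i))).card

lemma transpose_card' (μ : YoungDiagram) : μ.transpose.card = μ.card := Finset.card_map _

lemma cells_injective' : Function.Injective YoungDiagram.cells := fun a b h => by
  ext x; simp only [YoungDiagram.mem_cells, h]

lemma rowLen_le_card (μ : YoungDiagram) (i : ℕ) : μ.rowLen i ≤ μ.card := by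
  rw [YoungDiagram.rowLen_eq_card]
  exact Finset.card_filter_le _ _

lemma mem_lt_card {μ : YoungDiagram} {i j : ℕ} (h : (i, j) ∈ μ) :
    i < μ.card ∧ j < μ.card := by
  constructor
  · have h' : (j, i) ∈ μ.transpose := by simp [h]
    rw [YoungDiagram.mem_iff_lt_rowLen] at h'
    calc i < μ.transpose.rowLen j := h'
    _ ≤ μ.transpose.card := rowLen_le_card _ _
    _ = μ.card := transpose_card' μ
  · rw [YoungDiagram.mem_iff_lt_rowLen] at h
    exact lt_of_lt_of_le h (rowLen_le_card _ _)

lemma finite_card_eq (n : ℕ) : Finite {μ : YoungDiagram // μ.card = n} := by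
  have hmem : ∀ μ : {μ : YoungDiagram // μ.card = n},
      μ.1.cells ∈ (Finset.range n ×ˢ Finset.range n).powerset := by
    rintro ⟨μ, hμ⟩
    rw [Finset.mem_powerset]
    rintro ⟨i, j⟩ hc
    have := mem_lt_card (μ := μ) (i := i) (j := j) hc
    rw [hμ] at this
    simp only [Finset.mem_product, Finset.mem_range]
    exact this
  refine Finite.of_injective
    (fun μ : {μ : YoungDiagram // μ.card = n} =>
      (⟨μ.1.cells, hmem μ⟩ : {s // s ∈ (Finset.range n ×ˢ Finset.range n).powerset})) ?_
  intro a b h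
  simp only [Subtype.mk.injEq] at h
  exact Subtype.ext (cells_injective' h)

lemma even_bad (n : ℕ) :
    2 ∣ Nat.card {μ : YoungDiagram // μ.card = n ∧
      ¬ oddParts μ ≡ oddParts μ.transpose [MOD 4]} := by
  have hfin := finite_card_eq n
  have : Finite {μ : YoungDiagram // μ.card = n ∧
      ¬ oddParts μ ≡ oddParts μ.transpose [MOD 4]} :=
    Finite.of_injective (fun x => (⟨x.1, x.2.1⟩ : {μ : YoungDiagram // μ.card = n}))
      (fun a b h => by simpa [Subtype.ext_iff] using h)
  cases nonempty_fintype {μ : YoungDiagram // μ.card = n ∧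
      ¬ oddParts μ ≡ oddParts μ.transpose [MOD 4]}
  rw [Nat.card_eq_fintype_card, ← ZMod.natCast_eq_zero_iff]
  rw [Fintype.card, Finset.card_eq_sum_ones, Nat.cast_sum]
  refine Finset.sum_ninvolution
    (fun x => ⟨x.1.transpose, by
        refine ⟨by rw [transpose_card', x.2.1], ?_⟩
        rw [YoungDiagram.transpose_transpose]
        exact fun hcon => x.2.2 hcon.symm⟩)
    (fun a => by decide) (fun a ha => ?_) (fun a => Finset.mem_univ _)
    (fun a => by apply Subtype.ext; simp)
  intro hcon
  apply a.2.2
  have h1 : a.1.transpose = a.1 := congrArg Subtype.val hcon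
  rw [h1]

theorem stmt4 (n : ℕ) :
    Nat.card {μ : YoungDiagram // μ.card = n ∧ oddParts μ ≡ oddParts μ.transpose [MOD 4]}
      ≡ Nat.card {μ : YoungDiagram // μ.card = n} [MOD 2] := by
  have hfin := finite_card_eq n
  have e := (Equiv.sumCompl (fun μ : {μ : YoungDiagram // μ.card = n} =>
      oddParts μ.1 ≡ oddParts μ.1.transpose [MOD 4])).symm
  have hsplit : Nat.card {μ : YoungDiagram // μ.card = n}
      = Nat.card {μ : YoungDiagram // μ.card = n ∧ oddParts μ ≡ oddParts μ.transpose [MOD 4]}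
      + Nat.card {μ : YoungDiagram // μ.card = n ∧
          ¬ oddParts μ ≡ oddParts μ.transpose [MOD 4]} := by
    rw [Nat.card_congr e, Nat.card_sum]
    congr 1
    · exact Nat.card_congr (Equiv.subtypeSubtypeEquivSubtypeInter
        (fun μ : YoungDiagram => μ.card = n)
        (fun μ => oddParts μ ≡ oddParts μ.transpose [MOD 4]))
    · exact Nat.card_congr (Equiv.subtypeSubtypeEquivSubtypeInter
        (fun μ : YoungDiagram => μ.card = n)
        (fun μ => ¬ oddParts μ ≡ oddParts μ.transpose [MOD 4]))
  rw [hsplit]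
  obtain ⟨k, hk⟩ := even_bad n
  rw [hk]
  unfold Nat.ModEq
  omega
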